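/- Let m_n be a sequence of positive integers with m_n → ∞ and m_n/n → 0, and let a_{k,n} = a_{k,n}(m_n) be the OLS weights based on x_k = −2log(2πk/n). Then lim_{n→∞} m_n ∑_{k=1}^{m_n} a_{k,n}² = 1/4 and max_{1≤k≤m_n} |a_{k,n}| = O(m_n^{−1/2} log m_n). -/

import Mathlib

/-!
Write `x_i = -2 log(2π/n) - 2 log i`. OLS weights only see the centred regressor, so this
affine change of variable gives `a_{k,n} = -(log k - ℓ̄_m) / (2 S_m)` with
`S_m = ∑_{k ≤ m} (log k - ℓ̄_m)²`, hence `∑ a_{k,n}² = 1 / (4 S_m)` and, as `0 ≤ log k, ℓ̄_m ≤ log m`,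
`|a_{k,n}| ≤ log m / (2 S_m)`. Both claims then follow from `S_m = m + O(log² m)`, which comes from
`m S_m = m ∑ log² k - (∑ log k)²` after comparing both sums with `∫₁^m log` and `∫₁^m log²`.
-/

open Real Filter

/-- The OLS weight `a_{k,n}(m)` of the log-periodogram (GPH) regression, built from the
regressors `x_i = −2 log(2πi/n)`. -/
noncomputable def gphWeight (n m k : ℕ) : ℝ :=
  let x : ℕ → ℝ := fun i => -2 * Real.log (2 * π * i / n)
  let xbar : ℝ := (m : ℝ)⁻¹ * ∑ j ∈ Finset.Icc 1 m, x j
  (x k - xbar) / ∑ i ∈ Finset.Icc 1 m, (x i - xbar) ^ 2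

open Finset

noncomputable def sampleMean (x : ℕ → ℝ) (m : ℕ) : ℝ := (m : ℝ)⁻¹ * ∑ j ∈ Icc 1 m, x j

noncomputable def centeredSqSum (x : ℕ → ℝ) (m : ℕ) : ℝ :=
  ∑ i ∈ Icc 1 m, (x i - sampleMean x m) ^ 2

noncomputable def olsWeight (x : ℕ → ℝ) (m k : ℕ) : ℝ :=
  (x k - sampleMean x m) / centeredSqSum x m

section Affine

variable {x y : ℕ → ℝ} {m : ℕ} {a b : ℝ}

theorem sampleMean_affine (hm : m ≠ 0) (hxy : ∀ i ∈ Icc 1 m, x i = a + b * y i) :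
    sampleMean x m = a + b * sampleMean y m := by
  have hm' : (m : ℝ) ≠ 0 := by exact_mod_cast hm
  rw [sampleMean, sampleMean, sum_congr rfl hxy, sum_add_distrib, ← mul_sum, sum_const,
    Nat.card_Icc, Nat.add_sub_cancel, nsmul_eq_mul]
  field_simp

theorem centeredSqSum_affine (hm : m ≠ 0) (hxy : ∀ i ∈ Icc 1 m, x i = a + b * y i) :
    centeredSqSum x m = b ^ 2 * centeredSqSum y m := by
  rw [centeredSqSum, centeredSqSum, mul_sum]
  refine sum_congr rfl fun i hi => ?_
  rw [hxy i hi, sampleMean_affine hm hxy]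
  ring

theorem olsWeight_affine {k : ℕ} (hk : k ∈ Icc 1 m) (hxy : ∀ i ∈ Icc 1 m, x i = a + b * y i) :
    olsWeight x m k = olsWeight y m k / b := by
  have hm : m ≠ 0 := by grind
  rw [olsWeight, olsWeight, centeredSqSum_affine hm hxy, hxy k hk, sampleMean_affine hm hxy]
  rcases eq_or_ne b 0 with rfl | hb
  · simp
  · field_simp
    ring

end Affine

theorem centeredSqSum_nonneg (x : ℕ → ℝ) (m : ℕ) : 0 ≤ centeredSqSum x m :=
  sum_nonneg fun _ _ => sq_nonneg _

theorem sum_olsWeight_sq (x : ℕ → ℝ) (m : ℕ) :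
    ∑ k ∈ Icc 1 m, olsWeight x m k ^ 2 = (centeredSqSum x m)⁻¹ := by
  simp only [olsWeight, div_pow, ← sum_div]
  rw [← centeredSqSum, sq, div_self_mul_self']

theorem centeredSqSum_mul_eq (x : ℕ → ℝ) {m : ℕ} (hm : m ≠ 0) :
    centeredSqSum x m * m = (∑ i ∈ Icc 1 m, x i ^ 2) * m - (∑ i ∈ Icc 1 m, x i) ^ 2 := by
  have hm' : (m : ℝ) ≠ 0 := by exact_mod_cast hm
  simp_rw [centeredSqSum, sub_sq, sum_add_distrib, sum_sub_distrib, ← sum_mul, ← mul_sum,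
    sum_const, Nat.card_Icc, Nat.add_sub_cancel, nsmul_eq_mul, sampleMean]
  field_simp
  ring

theorem abs_sub_sampleMean_le {x : ℕ → ℝ} {m k : ℕ} {lo hi : ℝ}
    (hx : ∀ i ∈ Icc 1 m, x i ∈ Set.Icc lo hi) (hk : k ∈ Icc 1 m) :
    |x k - sampleMean x m| ≤ hi - lo := by
  have hm : (0 : ℝ) < m := Nat.cast_pos.mpr (by grind)
  have hcard : ((Icc 1 m).card : ℝ) = m := by simp
  have hlo : lo ≤ sampleMean x m := by
    rw [sampleMean, ← div_eq_inv_mul, le_div_iff₀ hm, ← hcard, mul_comm, ← nsmul_eq_mul]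
    exact card_nsmul_le_sum _ _ _ fun i hi => (hx i hi).1
  have hhi : sampleMean x m ≤ hi := by
    rw [sampleMean, ← div_eq_inv_mul, div_le_iff₀ hm, ← hcard, mul_comm, ← nsmul_eq_mul]
    exact sum_le_card_nsmul _ _ _ fun i hi => (hx i hi).2
  obtain ⟨hlo_k, hhi_k⟩ := hx k hk
  rw [abs_le]
  constructor <;> linarith

section SumIntegral

variable {f : ℝ → ℝ} {a b : ℕ}

theorem MonotoneOn.integral_add_le_sum_Icc (hab : a ≤ b) (hf : MonotoneOn f (Set.Icc a b)) :
    (∫ x in a..b, f x) + f a ≤ ∑ i ∈ Icc a b, f i := by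
  have h := hf.integral_le_sum_Ico hab
  rw [← Ico_add_one_right_eq_Icc, sum_eq_sum_Ico_succ_bot (by omega), ← sum_Ico_add']
  push_cast at h ⊢
  linarith

theorem MonotoneOn.sum_Icc_le_integral_add (hab : a ≤ b) (hf : MonotoneOn f (Set.Icc a b)) :
    ∑ i ∈ Icc a b, f i ≤ (∫ x in a..b, f x) + f b := by
  have h := hf.sum_le_integral_Ico hab
  rw [← Ico_add_one_right_eq_Icc, sum_Ico_succ_top (by omega)]
  linarith

end SumIntegral

theorem integral_log_sq {b : ℝ} (hb : 0 < b) :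
    ∫ x in (1 : ℝ)..b, log x ^ 2 = b * log b ^ 2 - 2 * b * log b + 2 * b - 2 := by
  have hpos : ∀ x ∈ Set.uIcc 1 b, 0 < x := by
    intro x hx
    rcases Set.mem_uIcc.mp hx with h | h <;> linarith [h.1]
  have hderiv : ∀ x ∈ Set.uIcc 1 b,
      HasDerivAt (fun x => x * log x ^ 2 - 2 * (x * log x) + 2 * x) (log x ^ 2) x := by
    intro x hx
    have hlog := hasDerivAt_log (hpos x hx).ne'
    refine ((((hasDerivAt_id' x).fun_mul (hlog.fun_pow 2)).fun_sub
      (((hasDerivAt_id' x).fun_mul hlog).const_mul 2)).fun_add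
      ((hasDerivAt_id' x).const_mul 2)).congr_deriv ?_
    field_simp [(hpos x hx).ne']
    ring
  have hint : IntervalIntegrable (fun x => log x ^ 2) MeasureTheory.volume 1 b :=
    ((continuousOn_log.mono fun x hx => (hpos x hx).ne').pow 2).intervalIntegrable
  rw [intervalIntegral.integral_eq_sub_of_hasDerivAt hderiv hint, log_one]
  ring

theorem sum_log_Icc_bounds {M : ℕ} (hM : 1 ≤ M) :
    M * log M - M + 1 ≤ ∑ k ∈ Icc 1 M, log k ∧
      ∑ k ∈ Icc 1 M, log k ≤ M * log M - M + 1 + log M := by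
  have hmono : MonotoneOn log (Set.Icc ((1 : ℕ) : ℝ) M) := fun x hx y _ hxy =>
    log_le_log (one_pos.trans_le (by simpa using hx.1)) hxy
  have h₁ := hmono.integral_add_le_sum_Icc hM
  have h₂ := hmono.sum_Icc_le_integral_add hM
  simp only [Nat.cast_one, integral_log, log_one, mul_zero, add_zero] at h₁ h₂
  constructor <;> linarith

theorem sum_log_sq_Icc_bounds {M : ℕ} (hM : 1 ≤ M) :
    M * log M ^ 2 - 2 * M * log M + 2 * M - 2 ≤ ∑ k ∈ Icc 1 M, log k ^ 2 ∧
      ∑ k ∈ Icc 1 M, log k ^ 2 ≤ M * log M ^ 2 - 2 * M * log M + 2 * M - 2 + log M ^ 2 := by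
  have hmono : MonotoneOn (fun x => log x ^ 2) (Set.Icc ((1 : ℕ) : ℝ) M) := by
    intro x hx y _ hxy
    simp only [Nat.cast_one, Set.mem_Icc] at hx
    exact pow_le_pow_left₀ (log_nonneg hx.1) (log_le_log (by linarith) hxy) 2
  have h₁ := hmono.integral_add_le_sum_Icc hM
  have h₂ := hmono.sum_Icc_le_integral_add hM
  simp only [Nat.cast_one, integral_log_sq (Nat.cast_pos.mpr hM), log_one] at h₁ h₂
  constructor <;> linarith

theorem abs_centeredSqSum_log_sub_le {M : ℕ} (hM : 1 ≤ M) :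
    |centeredSqSum (fun i => log i) M - M| ≤ 3 * (1 + log M) ^ 2 := by
  have hM₀ : (0 : ℝ) < M := by exact_mod_cast hM
  have hM₁ : (1 : ℝ) ≤ M := by exact_mod_cast hM
  set ℓ := log (M : ℝ)
  have hℓ : 0 ≤ ℓ := log_nonneg hM₁
  have hI : 0 ≤ M * ℓ - M + 1 := by
    have := one_sub_inv_le_log_of_pos hM₀
    have : (M : ℝ) * (1 - (M : ℝ)⁻¹) ≤ M * ℓ := by gcongr
    rw [mul_sub, mul_one, mul_inv_cancel₀ hM₀.ne'] at this
    linarith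
  obtain ⟨hL₁, hL₂⟩ := sum_log_Icc_bounds hM
  obtain ⟨hQ₁, hQ₂⟩ := sum_log_sq_Icc_bounds hM
  have hSM := centeredSqSum_mul_eq (fun i => log i) (by omega : M ≠ 0)
  suffices |centeredSqSum (fun i => log i) M * M - M * M| ≤ 3 * (1 + ℓ) ^ 2 * M by
    rwa [← sub_mul, abs_mul, abs_of_pos hM₀, mul_le_mul_iff_left₀ hM₀] at this
  -- The integral main terms cancel: `m ∫₁^m log² - (∫₁^m log)² = m² - 2 m log m - 1`.
  rw [hSM, abs_le]
  constructor
  · nlinarith [mul_le_mul_of_nonneg_right hQ₁ hM₀.le]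
  · nlinarith [mul_le_mul_of_nonneg_right hQ₂ hM₀.le]

theorem tendsto_centeredSqSum_log_div :
    Tendsto (fun M : ℕ => centeredSqSum (fun i => log i) M / M) atTop (nhds 1) := by
  have hlo : (fun x : ℝ => 3 * (1 + log x) ^ 2) =o[atTop] id := by
    refine (((Asymptotics.isLittleO_const_id_atTop (3 : ℝ)).add
      (Real.isLittleO_log_id_atTop.const_mul_left 6)).add
      ((Real.isLittleO_pow_log_id_atTop (n := 2)).const_mul_left 3)).congr_left fun x => ?_
    ring
  have herr := hlo.tendsto_div_nhds_zero.comp tendsto_natCast_atTop_atTop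
  suffices Tendsto (fun M : ℕ => centeredSqSum (fun i => log i) M / M - 1) atTop (nhds 0) by
    simpa using this.add_const 1
  refine squeeze_zero_norm' ?_ herr
  filter_upwards [eventually_ge_atTop 1] with M hM
  have hM₀ : (0 : ℝ) < M := by exact_mod_cast hM
  rw [Real.norm_eq_abs, div_sub_one hM₀.ne', abs_div, abs_of_pos hM₀]
  exact div_le_div_of_nonneg_right (abs_centeredSqSum_log_sub_le hM) hM₀.le

theorem gphWeight_eq_olsWeight (n m k : ℕ) :
    gphWeight n m k = olsWeight (fun i => -2 * log (2 * π * i / n)) m k :=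
  rfl

theorem gphWeight_eq_olsWeight_log_div {n m k : ℕ} (hn : n ≠ 0) (hk : k ∈ Icc 1 m) :
    gphWeight n m k = olsWeight (fun i => log i) m k / (-2) := by
  rw [gphWeight_eq_olsWeight]
  refine olsWeight_affine (a := -2 * log (2 * π / n)) hk fun i hi => ?_
  have hi₀ : (i : ℝ) ≠ 0 := by have := (mem_Icc.mp hi).1; positivity
  rw [mul_div_right_comm, log_mul (by positivity) hi₀]
  ring

theorem abs_olsWeight_log_le {M k : ℕ} (hk : k ∈ Icc 1 M) :
    |olsWeight (fun i => log i) M k| ≤ log M / centeredSqSum (fun i => log i) M := by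
  have hlog : ∀ i ∈ Icc 1 M, log (i : ℝ) ∈ Set.Icc 0 (log M) := fun i hi => by
    obtain ⟨hi₁, hiM⟩ := mem_Icc.mp hi
    exact ⟨log_nonneg (by exact_mod_cast hi₁), log_le_log (by positivity) (by exact_mod_cast hiM)⟩
  rw [olsWeight, abs_div, abs_of_nonneg (centeredSqSum_nonneg _ _)]
  simpa using div_le_div_of_nonneg_right (abs_sub_sampleMean_le hlog hk)
    (centeredSqSum_nonneg _ _)

theorem sum_gphWeight_sq {n : ℕ} (hn : n ≠ 0) (m : ℕ) :
    ∑ k ∈ Icc 1 m, gphWeight n m k ^ 2 = (4 * centeredSqSum (fun i => log i) m)⁻¹ := by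
  rw [sum_congr rfl fun k hk => by rw [gphWeight_eq_olsWeight_log_div hn hk]]
  simp only [div_pow, ← sum_div, sum_olsWeight_sq]
  ring

theorem abs_gphWeight_le {n m k : ℕ} (hn : n ≠ 0) (hk : k ∈ Icc 1 m) :
    |gphWeight n m k| ≤ log m / (2 * centeredSqSum (fun i => log i) m) := by
  rw [gphWeight_eq_olsWeight_log_div hn hk, abs_div, abs_neg, abs_two, mul_comm, ← div_div]
  gcongr
  exact abs_olsWeight_log_le hk

theorem gph_weights_asymptotics_general (m : ℕ → ℕ)
    (hm : Tendsto (fun n => (m n : ℝ)) atTop atTop) :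
    Tendsto (fun n => (m n : ℝ) * ∑ k ∈ Finset.Icc 1 (m n), (gphWeight n (m n) k) ^ 2)
        atTop (nhds (1 / 4)) ∧
    ∃ C : ℝ, 0 < C ∧ ∀ᶠ n in atTop, ∀ k ∈ Finset.Icc 1 (m n),
      |gphWeight n (m n) k| ≤ C * ((m n : ℝ) ^ (-(1 : ℝ) / 2) * Real.log (m n)) := by
  set S : ℕ → ℝ := centeredSqSum fun i => log i with hS_def
  have hmN : Tendsto m atTop atTop := tendsto_natCast_atTop_iff.mp hm
  have hS : Tendsto (fun n => S (m n) / m n) atTop (nhds 1) :=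
    tendsto_centeredSqSum_log_div.comp hmN
  have hev : ∀ᶠ n in atTop, n ≠ 0 ∧ 1 ≤ m n ∧ (m n : ℝ) / 2 ≤ S (m n) := by
    filter_upwards [eventually_ne_atTop 0, hmN.eventually_ge_atTop 1,
      hS.eventually (eventually_gt_nhds one_half_lt_one)] with n hn hm₁ hSm
    rw [lt_div_iff₀ (by exact_mod_cast hm₁)] at hSm
    exact ⟨hn, hm₁, by linarith⟩
  constructor
  · have hlim := (hS.const_mul 4).inv₀ (by norm_num)
    rw [mul_one, ← one_div] at hlim
    refine hlim.congr' (hev.mono fun n hn => ?_)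
    simp only [sum_gphWeight_sq hn.1, ← hS_def, mul_inv, inv_div]
    ring
  · refine ⟨1, one_pos, hev.mono fun n ⟨hn, hm₁, hSm⟩ k hk => ?_⟩
    have hm₁' : (1 : ℝ) ≤ m n := by exact_mod_cast hm₁
    calc |gphWeight n (m n) k| ≤ log (m n) / (2 * S (m n)) := abs_gphWeight_le hn hk
      _ ≤ log (m n) / (2 * (m n / 2)) := by gcongr
      _ = (m n : ℝ) ^ (-1 : ℝ) * log (m n) := by rw [rpow_neg_one]; field_simp
      _ ≤ 1 * ((m n : ℝ) ^ (-(1 : ℝ) / 2) * log (m n)) := by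
          rw [one_mul]
          gcongr
          norm_num

/-- If `m_n → ∞` and `m_n/n → 0`, then `m_n ∑_{k=1}^{m_n} a_{k,n}² → 1/4` and
`max_{1≤k≤m_n} |a_{k,n}| = O(m_n^{−1/2} log m_n)`. -/
theorem gph_weights_asymptotics (m : ℕ → ℕ)
    (hm : Tendsto (fun n => (m n : ℝ)) atTop atTop)
    (hmn : Tendsto (fun n => (m n : ℝ) / n) atTop (nhds 0)) :
    Tendsto (fun n => (m n : ℝ) * ∑ k ∈ Finset.Icc 1 (m n), (gphWeight n (m n) k) ^ 2)
        atTop (nhds (1 / 4)) ∧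
    ∃ C : ℝ, 0 < C ∧ ∀ᶠ n in atTop, ∀ k ∈ Finset.Icc 1 (m n),
      |gphWeight n (m n) k| ≤ C * ((m n : ℝ) ^ (-(1 : ℝ) / 2) * Real.log (m n)) :=
  gph_weights_asymptotics_general m hm
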